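/- For α ≥ 2, a strategy profile whose graph is a star on n vertices minimizes the social cost among all strategy profiles: the optimal social cost equals (n−1)α + 2(n−1)². -/

import Mathlib

open SimpleGraph ENNReal Finset

/-- A strategy profile: each player chooses a set of other players. -/
abbrev Profile (n : ℕ) := Fin n → Finset (Fin n)

/-- Validity: no player buys an edge to herself. -/
def Valid {n : ℕ} (s : Profile n) : Prop := ∀ i, i ∉ s i

/-- The graph formed by a strategy profile: `{i,j}` is an edge iff `j ∈ s i` or `i ∈ s j`. -/
def NCGraph {n : ℕ} (s : Profile n) : SimpleGraph (Fin n) :=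
  SimpleGraph.fromRel (fun i j => j ∈ s i)

instance {n : ℕ} (s : Profile n) : DecidableRel (NCGraph s).Adj := fun i j =>
  decidable_of_iff (i ≠ j ∧ (j ∈ s i ∨ i ∈ s j))
    (SimpleGraph.fromRel_adj (fun a b => b ∈ s a) i j).symm

/-- Distance cost of player `i`: sum of (extended) distances to all players. -/
noncomputable def dCost {n : ℕ} (s : Profile n) (i : Fin n) : ℝ≥0∞ :=
  ∑ j, ((NCGraph s).edist i j : ℝ≥0∞)

/-- Total cost of player `i` in the network creation game with parameter `α`. -/
noncomputable def cost {n : ℕ} (α : ℝ) (s : Profile n) (i : Fin n) : ℝ≥0∞ :=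
  ENNReal.ofReal α * (s i).card + dCost s i

/-- Social cost: sum of all players' costs. -/
noncomputable def socialCost {n : ℕ} (α : ℝ) (s : Profile n) : ℝ≥0∞ :=
  ∑ i, cost α s i

/-- A profile is rational if no edge is bought by both of its endpoints. -/
def Rational {n : ℕ} (s : Profile n) : Prop := ∀ i j, j ∈ s i → i ∉ s j

/-- Pure Nash equilibrium. -/
def IsNashEq {n : ℕ} (α : ℝ) (s : Profile n) : Prop :=
  ∀ (i : Fin n) (t : Finset (Fin n)), i ∉ t →
    cost α s i ≤ cost α (Function.update s i t) i

/-- Strong equilibrium: no nonempty coalition has a joint deviation strictly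
decreasing every member's cost. -/
def IsStrongEq {n : ℕ} (α : ℝ) (s : Profile n) : Prop :=
  ∀ (K : Finset (Fin n)) (s' : Profile n), K.Nonempty → Valid s' →
    (∀ i ∉ K, s' i = s i) → ∃ i ∈ K, cost α s i ≤ cost α s' i

/-- A star graph: one center adjacent to all other vertices, and no other edges. -/
def IsStar {V : Type*} (G : SimpleGraph V) : Prop :=
  ∃ c : V, ∀ i j : V, G.Adj i j ↔ i ≠ j ∧ (i = c ∨ j = c)

/-!
Let `m` be the number of edges of the graph and `D` the sum of its distances over ordered pairs.
A pair of distinct vertices is at distance `1` if adjacent and at least `2` otherwise, so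
`D + 2m ≥ 2n(n-1)`, with equality when the diameter is at most `2`, as in a star. Each edge is
bought at least once, so the social cost is at least `αm + D ≥ (α - 2)m + 2n(n-1)`; a connected
graph has `m ≥ n - 1` and a disconnected one has `D = ∞`, so for `α ≥ 2` the cost is at least
`α(n-1) + 2(n-1)²`. A rational star buys each of its `n - 1` edges exactly once and attains this.
-/

namespace SimpleGraph

variable {V : Type*} {G : SimpleGraph V}

lemma two_le_edist_of_ne_of_not_adj {i j : V} (hne : i ≠ j) (hadj : ¬G.Adj i j) :
    2 ≤ G.edist i j := by
  have h : 1 < G.edist i j := by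
    rw [← not_le, edist_le_one_iff_adj_or_eq]
    tauto
  exact Order.add_one_le_of_lt h

lemma two_mul_ite_ne_le_edist_add_ite_adj [DecidableEq V] [DecidableRel G.Adj] (i j : V) :
    2 * (if i ≠ j then 1 else 0 : ℝ≥0∞) ≤ G.edist i j + if G.Adj i j then 1 else 0 := by
  by_cases hij : i = j
  · simp [hij]
  by_cases hadj : G.Adj i j
  · simp [hij, hadj, edist_eq_one_iff_adj.mpr hadj, one_add_one_eq_two]
  · simpa [hij, hadj] using ENat.toENNReal_le.mpr (two_le_edist_of_ne_of_not_adj hij hadj)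

lemma edist_add_ite_adj_eq_of_edist_le_two [DecidableEq V] [DecidableRel G.Adj] {i j : V}
    (h : G.edist i j ≤ 2) :
    (G.edist i j + if G.Adj i j then 1 else 0 : ℝ≥0∞) = 2 * if i ≠ j then 1 else 0 := by
  by_cases hij : i = j
  · simp [hij]
  by_cases hadj : G.Adj i j
  · simp [hij, hadj, edist_eq_one_iff_adj.mpr hadj, one_add_one_eq_two]
  · simp [hij, hadj, le_antisymm h (two_le_edist_of_ne_of_not_adj hij hadj)]

lemma sum_sum_edist_eq_top_of_not_preconnected [Fintype V] (h : ¬G.Preconnected) :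
    ∑ i, ∑ j, (G.edist i j : ℝ≥0∞) = ⊤ := by
  obtain ⟨u, v, huv⟩ : ∃ u v, ¬G.Reachable u v := by
    simpa [Preconnected] using h
  refine ENNReal.sum_eq_top.mpr ⟨u, mem_univ u, ENNReal.sum_eq_top.mpr ⟨v, mem_univ v, ?_⟩⟩
  simp [edist_eq_top_of_not_reachable huv]

variable [Fintype V] [DecidableRel G.Adj]

lemma sum_sum_ite_ne [DecidableEq V] :
    ∑ i : V, ∑ j : V, (if i ≠ j then 1 else 0 : ℝ≥0∞)
      = (Fintype.card V * (Fintype.card V - 1) : ℕ) := by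
  have hrow (i : V) : ∑ j : V, (if i ≠ j then 1 else 0 : ℝ≥0∞) = (Fintype.card V - 1 : ℕ) := by
    rw [sum_boole, filter_ne, card_erase_of_mem (mem_univ i), card_univ]
  simp only [hrow, sum_const, card_univ, nsmul_eq_mul, Nat.cast_mul]

lemma sum_sum_ite_adj :
    ∑ i : V, ∑ j : V, (if G.Adj i j then 1 else 0 : ℝ≥0∞) = 2 * #G.edgeFinset := by
  have hrow (i : V) : ∑ j : V, (if G.Adj i j then 1 else 0 : ℝ≥0∞) = G.degree i := by
    rw [sum_boole, ← neighborFinset_eq_filter, card_neighborFinset_eq_degree]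
  simp_rw [hrow]
  exact_mod_cast G.sum_degrees_eq_twice_card_edges

lemma two_mul_card_offDiag_le_sum_edist_add [DecidableEq V] :
    2 * (Fintype.card V * (Fintype.card V - 1) : ℕ)
      ≤ ∑ i, ∑ j, (G.edist i j : ℝ≥0∞) + 2 * #G.edgeFinset := by
  rw [← sum_sum_ite_ne, ← sum_sum_ite_adj, mul_sum, ← sum_add_distrib]
  refine sum_le_sum fun i _ => ?_
  rw [mul_sum, ← sum_add_distrib]
  exact sum_le_sum fun j _ => two_mul_ite_ne_le_edist_add_ite_adj i j

lemma sum_edist_add_eq_of_edist_le_two [DecidableEq V] (h : ∀ i j, G.edist i j ≤ 2) :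
    ∑ i, ∑ j, (G.edist i j : ℝ≥0∞) + 2 * #G.edgeFinset
      = 2 * (Fintype.card V * (Fintype.card V - 1) : ℕ) := by
  rw [← sum_sum_ite_ne, ← sum_sum_ite_adj, mul_sum, ← sum_add_distrib]
  refine sum_congr rfl fun i _ => ?_
  rw [mul_sum, ← sum_add_distrib]
  exact sum_congr rfl fun j _ => edist_add_ite_adj_eq_of_edist_le_two (h i j)

end SimpleGraph

section Star

variable {V : Type*} {G : SimpleGraph V}

lemma IsStar.edist_le_two (h : IsStar G) (i j : V) : G.edist i j ≤ 2 := by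
  obtain ⟨c, hc⟩ := h
  have hle (v : V) : G.edist v c ≤ 1 := by
    rw [edist_le_one_iff_adj_or_eq, hc]
    tauto
  calc G.edist i j ≤ G.edist i c + G.edist c j := SimpleGraph.edist_triangle
    _ ≤ 1 + 1 := add_le_add (hle i) (edist_comm ▸ hle j)
    _ = 2 := one_add_one_eq_two

variable [Fintype V] [DecidableEq V] [DecidableRel G.Adj]

lemma IsStar.card_edgeFinset (h : IsStar G) : #G.edgeFinset = Fintype.card V - 1 := by
  obtain ⟨c, hc⟩ := h
  have hinc : G.edgeFinset = G.incidenceFinset c := by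
    ext e
    induction e using Sym2.ind with
    | _ i j =>
      simp only [mem_edgeFinset, mem_incidenceFinset, incidenceSet, Set.mem_ofPred_eq, mem_edgeSet,
        Sym2.mem_iff, hc]
      tauto
  have hnbr : G.neighborFinset c = univ.erase c := by
    ext v
    simp [hc, eq_comm]
  rw [hinc, card_incidenceFinset_eq_degree, ← card_neighborFinset_eq_degree, hnbr,
    card_erase_of_mem (mem_univ c), card_univ]

lemma IsStar.sum_sum_edist (h : IsStar G) :
    ∑ i, ∑ j, (G.edist i j : ℝ≥0∞) = 2 * ((Fintype.card V - 1 : ℕ) : ℝ≥0∞) ^ 2 := by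
  have hsum := sum_edist_add_eq_of_edist_le_two h.edist_le_two
  rw [h.card_edgeFinset] at hsum
  obtain ⟨c, -⟩ := h
  obtain ⟨k, hk⟩ := Nat.exists_eq_add_one_of_ne_zero (@Fintype.card_ne_zero V _ ⟨c⟩)
  rw [hk, Nat.add_sub_cancel] at hsum ⊢
  refine (ENNReal.add_left_inj (a := 2 * k) (by finiteness)).mp ?_
  rw [hsum]
  push_cast
  ring

end Star

section Profile

variable {n : ℕ}

lemma ncGraph_adj (s : Profile n) (i j : Fin n) :
    (NCGraph s).Adj i j ↔ i ≠ j ∧ (j ∈ s i ∨ i ∈ s j) :=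
  fromRel_adj _ i j

lemma Rational.valid {s : Profile n} (hr : Rational s) : Valid s :=
  fun i hi => hr i i hi hi

lemma edgeFinset_ncGraph {s : Profile n} (hv : Valid s) :
    (NCGraph s).edgeFinset = (univ.sigma s).image fun p => s(p.1, p.2) := by
  ext e
  induction e using Sym2.ind with
  | _ i j =>
    simp only [mem_edgeFinset, mem_edgeSet, ncGraph_adj, mem_image, mem_sigma, mem_univ,
      true_and, Sigma.exists, Sym2.eq_iff]
    constructor
    · rintro ⟨-, hij | hji⟩
      · exact ⟨i, j, hij, Or.inl ⟨rfl, rfl⟩⟩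
      · exact ⟨j, i, hji, Or.inr ⟨rfl, rfl⟩⟩
    · rintro ⟨a, b, hab, ⟨rfl, rfl⟩ | ⟨rfl, rfl⟩⟩
      · exact ⟨fun h => hv a (h ▸ hab), Or.inl hab⟩
      · exact ⟨fun h => hv a (h ▸ hab), Or.inr hab⟩

lemma card_edgeFinset_ncGraph_le {s : Profile n} (hv : Valid s) :
    #(NCGraph s).edgeFinset ≤ ∑ i, #(s i) := by
  rw [edgeFinset_ncGraph hv, ← card_sigma]
  exact card_image_le

lemma Rational.card_edgeFinset_ncGraph {s : Profile n} (hr : Rational s) :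
    #(NCGraph s).edgeFinset = ∑ i, #(s i) := by
  rw [edgeFinset_ncGraph hr.valid, ← card_sigma]
  refine card_image_of_injOn ?_
  rintro ⟨i, j⟩ hij ⟨i', j'⟩ hij' he
  simp only [coe_sigma, Set.mem_sigma_iff, mem_coe, mem_univ, true_and, Sym2.eq_iff] at hij hij' he
  obtain ⟨rfl, rfl⟩ | ⟨rfl, rfl⟩ := he
  · rfl
  · exact absurd hij' (hr i j hij)

lemma socialCost_eq (α : ℝ) (s : Profile n) :
    socialCost α s = ENNReal.ofReal α * ((∑ i, #(s i) : ℕ) : ℝ≥0∞)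
      + ∑ i, ∑ j, ((NCGraph s).edist i j : ℝ≥0∞) := by
  simp only [socialCost, cost, dCost, sum_add_distrib, ← mul_sum, Nat.cast_sum]

end Profile

lemma mul_add_two_mul_sq_le {a D : ℝ≥0∞} {k m B : ℕ} (ha : 2 ≤ a) (hkm : k ≤ m) (hmB : m ≤ B)
    (hD : 2 * ((k + 1) * k : ℕ) ≤ D + 2 * m) : a * k + 2 * k ^ 2 ≤ a * B + D := by
  obtain ⟨j, rfl⟩ := Nat.exists_eq_add_of_le hkm
  obtain ⟨l, rfl⟩ := Nat.exists_eq_add_of_le hmB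
  have hsq : 2 * k ^ 2 ≤ D + 2 * j := by
    refine (ENNReal.add_le_add_iff_right (a := 2 * k) (by finiteness)).mp ?_
    convert hD using 1 <;> push_cast <;> ring
  calc a * k + 2 * k ^ 2 ≤ a * k + (a * j + D) := by
        gcongr
        calc 2 * (k : ℝ≥0∞) ^ 2 ≤ D + 2 * j := hsq
          _ ≤ D + a * j := by gcongr
          _ = a * j + D := add_comm _ _
    _ ≤ a * (k + j + l : ℕ) + D := by
        rw [← add_assoc, ← mul_add]
        gcongr
        exact_mod_cast Nat.le_add_right _ _

theorem le_socialCost {n : ℕ} {α : ℝ} (hα : 2 ≤ α) {t : Profile n} (ht : Valid t) :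
    ENNReal.ofReal α * ((n - 1 : ℕ) : ℝ≥0∞) + 2 * ((n - 1 : ℕ) : ℝ≥0∞) ^ 2 ≤ socialCost α t := by
  obtain rfl | hn := Nat.eq_zero_or_pos n
  · simp
  have : Nonempty (Fin n) := ⟨⟨0, hn⟩⟩
  rw [socialCost_eq]
  by_cases hconn : (NCGraph t).Connected
  · have hm : n - 1 ≤ #(NCGraph t).edgeFinset := by
      have := hconn.card_vert_le_card_edgeSet_add_one
      rw [Nat.card_eq_fintype_card, Fintype.card_fin, Nat.card_eq_fintype_card,
        ← edgeFinset_card] at this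
      omega
    have hD := (NCGraph t).two_mul_card_offDiag_le_sum_edist_add
    rw [Fintype.card_fin, show n * (n - 1) = (n - 1 + 1) * (n - 1) by rw [Nat.sub_add_cancel hn]]
      at hD
    refine mul_add_two_mul_sq_le ?_ hm (card_edgeFinset_ncGraph_le ht) hD
    simpa using ENNReal.ofReal_le_ofReal hα
  · rw [sum_sum_edist_eq_top_of_not_preconnected fun h => hconn ⟨h⟩, add_top]
    exact le_top

theorem stmt12_general {n : ℕ} (α : ℝ) (hα : 2 ≤ α)
    (s : Profile n) (hr : Rational s) (hstar : IsStar (NCGraph s)) :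
    socialCost α s = ENNReal.ofReal α * ((n - 1 : ℕ) : ℝ≥0∞) + 2 * ((n - 1 : ℕ) : ℝ≥0∞) ^ 2 ∧
    ∀ t : Profile n, Valid t → socialCost α s ≤ socialCost α t := by
  have hcost : socialCost α s
      = ENNReal.ofReal α * ((n - 1 : ℕ) : ℝ≥0∞) + 2 * ((n - 1 : ℕ) : ℝ≥0∞) ^ 2 := by
    rw [socialCost_eq, ← hr.card_edgeFinset_ncGraph, hstar.card_edgeFinset, hstar.sum_sum_edist,
      Fintype.card_fin]
  exact ⟨hcost, fun t ht => hcost ▸ le_socialCost hα ht⟩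

/-- For `α ≥ 2`, a rational star profile minimizes the social cost, which
equals `(n−1)α + 2(n−1)²`. -/
theorem stmt12 {n : ℕ} (hn : 3 ≤ n) (α : ℝ) (hα : 2 ≤ α)
    (s : Profile n) (hv : Valid s) (hr : Rational s) (hstar : IsStar (NCGraph s)) :
    socialCost α s = ENNReal.ofReal α * ((n - 1 : ℕ) : ℝ≥0∞) + 2 * ((n - 1 : ℕ) : ℝ≥0∞) ^ 2 ∧
    ∀ t : Profile n, Valid t → socialCost α s ≤ socialCost α t :=
  stmt12_general α hα s hr hstar
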